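/- arXiv:2004.00767 — 2 statements merged into one kernel-verified Lean document; each statement's English description precedes it below -/
import Mathlib

section
/- Let n, k, s be positive integers with k ≤ n, write k = qs + r with 0 ≤ r < s, and let λ(k,s) be the partition consisting of r copies of q+1 followed by s−r copies of q. Then the ideal I_{n,k,s} = ⟨e_n(x_1,...,x_n), e_{n−1}(x_1,...,x_n), ..., e_{n−k+1}(x_1,...,x_n), x_1^s, ..., x_n^s⟩ equals the ideal I_{n,λ(k,s)} generated by x_1^s,...,x_n^s together with all e_d(S) for S ⊆ {1,...,n} and d > |S| − λ'_n − λ'_{n−1} − ⋯ − λ'_{n−|S|+1}, where λ' is the conjugate of λ(k,s) padded with zeros to length n. -/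
/-!
Griffin's condition only involves the tail sums of `λ'`: for `λ = λ(k,s)` the cells outside the
first `m` columns number `k - ms` (truncated at `0`), so the condition on `e_d(S)` reads
`d > |S| - (k - (n - |S|) s)`. For `S = [n]` these are exactly the `e_d` with `d > n - k`.
Conversely, argue by downward induction on `|S|`: Pascal's rule
`e_d(S ∪ {i}) = e_d(S) + x_i e_{d-1}(S)` expresses `e_d(S)` modulo `x_i^s` through the
`e_{d-j}(S ∪ {i})` with `j < s`, and adding `i` to `S` lowers the bound by exactly `s - 1`;
once `(n - |S|) s ≥ k` the condition forces `d > |S|`, so `e_d(S) = 0`.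
-/

open MvPolynomial

/-- The differential operator associated to the monomial with exponent vector `d`. -/
noncomputable def Dexp {n : ℕ} (d : Fin n →₀ ℕ) :
    Module.End ℚ (MvPolynomial (Fin n) ℚ) :=
  ((List.finRange n).map fun i => ((pderiv i).toLinearMap :
      Module.End ℚ (MvPolynomial (Fin n) ℚ)) ^ (d i)).prod

/-- `odotE f` is the differential operator `∂f = f(∂/∂x_1,…,∂/∂x_n)`. -/
noncomputable def odotE {n : ℕ} (f : MvPolynomial (Fin n) ℚ) :
    Module.End ℚ (MvPolynomial (Fin n) ℚ) :=
  (AddMonoidAlgebra.coeff f).sum fun d c => c • Dexp d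

/-- `pairing f g` is the constant term of `(∂f)(g)`. -/
noncomputable def pairing {n : ℕ} (f g : MvPolynomial (Fin n) ℚ) : ℚ :=
  constantCoeff (odotE f g)


/-- The degree-`d` elementary symmetric polynomial in the variables indexed by
the subset `S` (it is `0` when `d > |S|` and `1` when `d = 0`). -/
noncomputable def eS {n : ℕ} (S : Finset (Fin n)) (d : ℕ) :
    MvPolynomial (Fin n) ℚ :=
  ∑ T ∈ S.powersetCard d, ∏ i ∈ T, X i

/-- `eS` extended to integer degrees, vanishing in negative degrees. -/
noncomputable def eZ {n : ℕ} (S : Finset (Fin n)) (m : ℤ) :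
    MvPolynomial (Fin n) ℚ :=
  if 0 ≤ m then eS S m.toNat else 0

/-- `conj lam j` is the `j`-th part `λ'_j` (for `j ≥ 1`) of the conjugate of
the partition `lam`, i.e. the number of parts of `lam` of size at least `j`. -/
def conj (lam : List ℕ) (j : ℕ) : ℕ := (lam.filter fun p => j ≤ p).length

/-- Griffin's ideal `I_{n,λ}`, generated by `x_i^s` for `1 ≤ i ≤ n` (where `s`
is the number of parts of `λ`) together with the partial elementary symmetric
polynomials `e_d(S)` for `S ⊆ [n]` and
`d > |S| - λ'_n - λ'_{n-1} - ⋯ - λ'_{n-|S|+1}`. -/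
noncomputable def griffinIdeal (n : ℕ) (lam : List ℕ) :
    Ideal (MvPolynomial (Fin n) ℚ) :=
  Ideal.span ((Set.range fun i : Fin n => X i ^ lam.length) ∪
    {f | ∃ (S : Finset (Fin n)) (d : ℕ),
      (S.card : ℤ) - ∑ t ∈ Finset.range S.card, (conj lam (n - t) : ℤ) < (d : ℤ) ∧
      f = eS S d})

/-- `λ(k,s)`: the partition of `k` into `s` parts differing by at most one. -/
def balancedPartition (k s : ℕ) : List ℕ :=
  List.replicate (k % s) (k / s + 1) ++ List.replicate (s - k % s) (k / s)

noncomputable def nksIdeal (n k s : ℕ) : Ideal (MvPolynomial (Fin n) ℚ) :=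
  Ideal.span ((Set.range fun i : Fin n => X i ^ s) ∪
    {f | ∃ d : ℕ, n - k + 1 ≤ d ∧ d ≤ n ∧ f = eS (Finset.univ : Finset (Fin n)) d})

lemma conj_cons (a : ℕ) (lam : List ℕ) (j : ℕ) :
    conj (a :: lam) j = conj lam j + if j ≤ a then 1 else 0 := by
  unfold conj
  rw [List.filter_cons]
  split <;> simp_all

lemma sum_range_conj_sub (lam : List ℕ) (n c : ℕ) :
    ∑ t ∈ Finset.range c, conj lam (n - t) = (lam.map fun p => c - (n - p)).sum := by
  induction lam with
  | nil => simp [conj]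
  | cons a lam ih =>
    have hcount : ((Finset.range c).filter fun t => n - t ≤ a) = Finset.Ico (n - a) c := by
      ext t
      simp only [Finset.mem_filter, Finset.mem_range, Finset.mem_Ico]
      omega
    simp only [conj_cons, Finset.sum_add_distrib, ih, Finset.sum_boole, hcount,
      Nat.card_Ico, List.map_cons, List.sum_cons, Nat.cast_id]
    ring

lemma balancedPartition_length {k s : ℕ} (hs : 0 < s) : (balancedPartition k s).length = s := by
  have := Nat.mod_lt k hs
  simp only [balancedPartition, List.length_append, List.length_replicate]
  omega

/-- The cells of `λ(k,s)` outside its first `n - c` columns. -/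
lemma sum_range_conj_balancedPartition {n k s c : ℕ} (hs : 0 < s) (hkn : k ≤ n) (hc : c ≤ n) :
    ∑ t ∈ Finset.range c, conj (balancedPartition k s) (n - t) = k - (n - c) * s := by
  rw [sum_range_conj_sub]
  simp only [balancedPartition, List.map_append, List.sum_append, List.map_replicate,
    List.sum_replicate, smul_eq_mul]
  have hk := Nat.div_add_mod k s
  have hr := Nat.mod_lt k hs
  have hq := Nat.le_mul_of_pos_left (k / s) hs
  generalize k / s = q at *
  generalize k % s = r at *
  generalize hm : n - c = m
  rcases le_or_gt m q with hmq | hqm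
  · obtain ⟨a, rfl⟩ := Nat.exists_eq_add_of_le hmq
    have h1 : r * (c - (n - (m + a + 1))) = r * (a + 1) := by
      rcases Nat.eq_zero_or_pos r with rfl | hr0
      · simp
      · congr 1
        omega
    have h2 : c - (n - (m + a)) = a := by omega
    have h3 : r * (a + 1) + (s - r) * a = r + s * a := by
      rw [mul_add, mul_one, add_right_comm, ← Nat.add_mul, Nat.add_sub_cancel' hr.le, add_comm]
    rw [h1, h2, h3, ← hk]
    ring_nf
    omega
  · have h1 : c - (n - (q + 1)) = 0 := by omega
    have h2 : c - (n - q) = 0 := by omega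
    have h3 : s * (q + 1) ≤ m * s := by rw [mul_comm]; exact Nat.mul_le_mul_right s hqm
    rw [h1, h2]
    rw [mul_add] at h3
    omega

section ElementarySymmetric

variable {n : ℕ}

lemma eS_eq_zero_of_card_lt {S : Finset (Fin n)} {d : ℕ} (h : S.card < d) : eS S d = 0 := by
  rw [eS, Finset.powersetCard_eq_empty.mpr h, Finset.sum_empty]

lemma eS_insert_succ {S : Finset (Fin n)} {i : Fin n} (hi : i ∉ S) (d : ℕ) :
    eS (insert i S) (d + 1) = eS S (d + 1) + X i * eS S d := by
  have hiT : ∀ T ∈ S.powersetCard d, i ∉ T := fun T hT h =>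
    hi ((Finset.mem_powersetCard.mp hT).1 h)
  rw [eS, Finset.powersetCard_succ_insert hi, Finset.sum_union, Finset.sum_image, eS, eS,
    Finset.mul_sum]
  · exact congrArg _ (Finset.sum_congr rfl fun T hT => Finset.prod_insert (hiT T hT))
  · intro a ha b hb hab
    rw [← Finset.erase_insert (hiT a ha), ← Finset.erase_insert (hiT b hb), hab]
  · refine Finset.disjoint_left.mpr fun T hT hT' => ?_
    obtain ⟨a, -, rfl⟩ := Finset.mem_image.mp hT'
    exact hi ((Finset.mem_powersetCard.mp hT).1 (Finset.mem_insert_self i a))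

/-- Pascal's rule telescopes to `e_d(S) ≡ ∑_{j<s} (-x_i)^j e_{d-j}(S ∪ {i})` modulo `x_i^s`. -/
lemma eS_mem_of_insert {I : Ideal (MvPolynomial (Fin n) ℚ)} {S : Finset (Fin n)} {i : Fin n}
    (hi : i ∉ S) {s d : ℕ} (hsd : s ≤ d) (hx : X i ^ s ∈ I)
    (h : ∀ j < s, eS (insert i S) (d - j) ∈ I) : eS S d ∈ I := by
  have step : ∀ j < s, X i ^ (j + 1) * eS S (d - (j + 1)) ∈ I → X i ^ j * eS S (d - j) ∈ I := by
    intro j hj hmem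
    obtain ⟨e, he, he'⟩ : ∃ e, d - j = e + 1 ∧ d - (j + 1) = e := ⟨d - (j + 1), by omega, rfl⟩
    have hpascal : X i ^ j * eS S (d - j) =
        X i ^ j * eS (insert i S) (d - j) - X i ^ (j + 1) * eS S (d - (j + 1)) := by
      rw [he, eS_insert_succ hi, he']
      ring
    rw [hpascal]
    exact I.sub_mem (I.mul_mem_left _ (h j hj)) hmem
  simpa using Nat.decreasingInduction (motive := fun j _ => X i ^ j * eS S (d - j) ∈ I)
    step (I.mul_mem_right _ hx) (Nat.zero_le s)

end ElementarySymmetric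

lemma eS_mem_nksIdeal {n k s : ℕ} (hkn : k ≤ n) (S : Finset (Fin n)) (d : ℕ)
    (hd : (S.card : ℤ) - ((k - (n - S.card) * s : ℕ) : ℤ) < d) : eS S d ∈ nksIdeal n k s := by
  refine Finset.strongDownwardInduction (n := n)
    (p := fun S => ∀ d : ℕ, (S.card : ℤ) - ((k - (n - S.card) * s : ℕ) : ℤ) < d →
      eS S d ∈ nksIdeal n k s)
    ?_ S (by simpa using S.card_le_univ) d hd
  clear S d hd
  intro S ih _ d hd
  by_cases hS : S = Finset.univ
  · subst hS
    rw [Finset.card_univ, Fintype.card_fin, Nat.sub_self, zero_mul, Nat.sub_zero] at hd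
    by_cases hdn : d ≤ n
    · exact Ideal.subset_span (Or.inr ⟨d, by omega, hdn, rfl⟩)
    · rw [eS_eq_zero_of_card_lt (by rw [Finset.card_univ, Fintype.card_fin]; omega)]
      exact zero_mem _
  obtain ⟨i, hi⟩ : ∃ i, i ∉ S := by simpa [Finset.eq_univ_iff_forall] using hS
  have hcard : S.card < n := by simpa using Finset.card_lt_univ_of_notMem hi
  obtain ⟨m, hm⟩ : ∃ m, n - S.card = m + 1 := ⟨n - S.card - 1, by omega⟩
  have hm' : n - (insert i S).card = m := by rw [Finset.card_insert_of_notMem hi]; omega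
  rw [hm] at hd
  rcases le_or_gt k ((m + 1) * s) with hks | hks
  · rw [eS_eq_zero_of_card_lt (by omega)]
    exact zero_mem _
  have hsd : s ≤ d := by
    rcases Nat.eq_zero_or_pos s with rfl | hs
    · exact Nat.zero_le d
    · obtain ⟨t, rfl⟩ : ∃ t, s = t + 1 := ⟨s - 1, by omega⟩
      have : (m + 1) * (t + 1) = m * t + m + t + 1 := by ring
      omega
  refine eS_mem_of_insert hi hsd (Ideal.subset_span (Or.inl ⟨i, rfl⟩)) fun j hj => ?_
  refine ih (by simpa using (insert i S).card_le_univ) (Finset.ssubset_insert hi) _ ?_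
  rw [hm', Finset.card_insert_of_notMem hi]
  have : (m + 1) * s = m * s + s := by ring
  omega

theorem I_nks_eq_griffin_general (n k s : ℕ) (hs : 0 < s) (hkn : k ≤ n) :
    Ideal.span ((Set.range fun i : Fin n => X i ^ s) ∪
        {f | ∃ d : ℕ, n - k + 1 ≤ d ∧ d ≤ n ∧
          f = eS (Finset.univ : Finset (Fin n)) d}) =
      griffinIdeal n
        (List.replicate (k % s) (k / s + 1) ++ List.replicate (s - k % s) (k / s)) := by
  change nksIdeal n k s = griffinIdeal n (balancedPartition k s)
  have griffin_bound (S : Finset (Fin n)) (d : ℕ) :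
      (S.card : ℤ) - ∑ t ∈ Finset.range S.card, (conj (balancedPartition k s) (n - t) : ℤ) < d ↔
        (S.card : ℤ) - ((k - (n - S.card) * s : ℕ) : ℤ) < d := by
    rw [← Nat.cast_sum, sum_range_conj_balancedPartition hs hkn (by simpa using S.card_le_univ)]
  rw [nksIdeal, griffinIdeal, balancedPartition_length hs]
  apply le_antisymm
  · refine Ideal.span_mono (Set.union_subset_union_right _ ?_)
    rintro _ ⟨d, hd, -, rfl⟩
    refine ⟨Finset.univ, d, (griffin_bound _ _).2 ?_, rfl⟩
    simp only [Finset.card_univ, Fintype.card_fin, Nat.sub_self, zero_mul, Nat.sub_zero]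
    omega
  · refine Ideal.span_le.mpr (Set.union_subset (Set.subset_union_left.trans Ideal.subset_span) ?_)
    rintro _ ⟨S, d, hd, rfl⟩
    exact eS_mem_nksIdeal hkn S d ((griffin_bound S d).1 hd)

/-- Proposition, conjectured by A. Wilson: for positive `n,k,s`
with `k ≤ n`, writing `k = qs + r`, the ideal
`I_{n,k,s} = ⟨e_n, e_{n-1}, …, e_{n-k+1}, x_1^s, …, x_n^s⟩` coincides with
Griffin's ideal `I_{n,λ(k,s)}` where `λ(k,s) = ((q+1)^r, q^{s-r})`. -/
theorem I_nks_eq_griffin (n k s : ℕ) (hn : 0 < n) (hk : 0 < k) (hs : 0 < s)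
    (hkn : k ≤ n) :
    Ideal.span ((Set.range fun i : Fin n => X i ^ s) ∪
        {f | ∃ d : ℕ, n - k + 1 ≤ d ∧ d ≤ n ∧
          f = eS (Finset.univ : Finset (Fin n)) d}) =
      griffinIdeal n
        (List.replicate (k % s) (k / s + 1) ++ List.replicate (s - k % s) (k / s)) :=
  I_nks_eq_griffin_general n k s hs hkn
end

section
/- Let T be an injective column-strict tableau of shape λ with entries ≤ n, where λ is a partition of k with s parts. Let C_1,...,C_r be the columns of T and let δ_{C_j} be the Vandermonde determinant in the variables whose indices appear in C_j. Then δ_T := ε_T · x(T) factors as δ_T = δ_{C_1} ⋯ δ_{C_r} · ∏ x_i^{s−1}, the product being over all i ∈ {1,...,n} not appearing in T. -/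
open MvPolynomial

open scoped Classical

/-- `(r, j)` (0-based row `r`, column `j`) is a box of the Young diagram of
`lam`: row `r` has `λ_{r+1}` boxes. -/
def IsBoxOf (lam : List ℕ) (r j : ℕ) : Prop := j < lam.getD r 0

/-- The letter `i` appears in the tableau `T` of shape `lam`. -/
def AppearsIn {n : ℕ} (lam : List ℕ) (T : ℕ → ℕ → Fin n) (i : Fin n) : Prop :=
  ∃ r j, IsBoxOf lam r j ∧ T r j = i

/-- `w` lies in the group `C_T` of permutations stabilizing each column of `T`
and fixing every letter not appearing in `T`. -/
def ColStab {n : ℕ} (lam : List ℕ) (T : ℕ → ℕ → Fin n)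
    (w : Equiv.Perm (Fin n)) : Prop :=
  (∀ i : Fin n, ¬AppearsIn lam T i → w i = i) ∧
  (∀ r j, IsBoxOf lam r j → ∃ r', IsBoxOf lam r' j ∧ w (T r j) = T r' j)

/-- `δ_T = ε_T · x(T)` : the antisymmetrization of the monomial `x(T)`
(whose exponent vector is `a`) over the column-stabilizer of `T`. -/
noncomputable def deltaTsum {n : ℕ} (lam : List ℕ) (T : ℕ → ℕ → Fin n)
    (a : Fin n → ℕ) : MvPolynomial (Fin n) ℚ :=
  ∑ w ∈ Finset.univ.filter (ColStab lam T),
    ((Equiv.Perm.sign w : ℤ) : ℚ) •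
      rename (⇑w) (monomial (Finsupp.equivFunOnFinite.symm a) 1)

/-- The product formula `δ_{C_1} ⋯ δ_{C_r} · ∏_{i ∉ T} x_i^{s-1}`, where
`δ_{C_j}` is the Vandermonde determinant in the variables indexed by the
`j`-th column of `T`. -/
noncomputable def deltaTprod {n : ℕ} (lam : List ℕ) (T : ℕ → ℕ → Fin n) :
    MvPolynomial (Fin n) ℚ :=
  (∏ j ∈ Finset.range (lam.headD 0),
    ∏ p ∈ (Finset.range lam.length ×ˢ Finset.range lam.length).filter
        fun p => p.1 < p.2 ∧ IsBoxOf lam p.1 j ∧ IsBoxOf lam p.2 j,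
      (X (T p.1 j) - X (T p.2 j))) *
  ∏ i ∈ Finset.univ.filter fun i : Fin n => ¬AppearsIn lam T i,
    X i ^ (lam.length - 1)

/-- Strict lexicographic order on exponent vectors, with
`x_1 > x_2 > ⋯ > x_n`. -/
def lexLt {n : ℕ} (u v : Fin n →₀ ℕ) : Prop :=
  ∃ i : Fin n, (∀ j, j < i → u j = v j) ∧ u i < v i

/-!
The column stabilizer `C_T` is the image of `∏_j Perm(C_j)` acting box-wise along the embedding
`(j, r) ↦ T r j` (and trivially off the letters of `T`), and the sign is multiplicative over the
columns. On the letters not in `T` the monomial `x(T)` is `∏ x_i ^ (s-1)`, fixed by `C_T`; on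
column `j` its exponent at row `r` is the number of boxes of the column below `r`. Hence `ε_T x(T)`
is that fixed factor times a product over the columns of alternants
`∑_σ sign σ ∏_r x_{σ r} ^ #{r' > r}`, each of which is a Vandermonde determinant.
-/

open Finset

open Equiv in
theorem sum_sign_mul_prod_pow_card_filter_lt {R ι : Type*} [CommRing R] [LinearOrder ι]
    (S : Finset ι) (v : ι → R) :
    ∑ σ : Perm S, ((Perm.sign σ : ℤ) : R) * ∏ i : S, v (σ i) ^ (S.filter (↑i < ·)).card =
      ∏ p ∈ (S ×ˢ S).filter (fun p => p.1 < p.2), (v p.1 - v p.2) := by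
  set e := S.orderIsoOfFin rfl
  have hcard (k : Fin S.card) : (S.filter ((e k : ι) < ·)).card = k.rev := by
    have h : (S.filter ((e k : ι) < ·)).card = (Ioi k).card :=
      card_bij' (fun x hx => e.symm ⟨x, (mem_filter.1 hx).1⟩) (fun l _ => (e l : ι))
        (fun x hx => by
          simpa [OrderIso.lt_symm_apply, ← Subtype.coe_lt_coe] using (mem_filter.1 hx).2)
        (fun l hl => by simpa using hl) (fun _ _ => by simp) (fun _ _ => by simp)
    rw [h, Fin.card_Ioi, Fin.val_rev]
    omega
  calc _ = (Matrix.of fun x i : S => v x ^ (S.filter (↑i < ·)).card).det :=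
        (Matrix.det_apply' _).symm
    _ = (Matrix.projVandermonde 1 fun k => v (e k)).det := by
        rw [← Matrix.det_submatrix_equiv_self e.toEquiv]
        congr
        ext k l
        simp [Matrix.projVandermonde_apply, hcard]
    _ = ∏ k, ∏ l ∈ Ioi k, (v (e k) - v (e l)) := by simp [Matrix.det_projVandermonde]
    _ = _ := by
        rw [prod_sigma']
        refine prod_nbij (fun x => ((e x.1 : ι), (e x.2 : ι))) ?_ ?_ ?_ ?_
        · rintro ⟨k, l⟩ hkl
          simpa using hkl
        · rintro ⟨k, l⟩ - ⟨k', l'⟩ - h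
          simp only [Prod.mk.injEq, Subtype.coe_inj, EmbeddingLike.apply_eq_iff_eq] at h
          obtain ⟨rfl, rfl⟩ := h
          rfl
        · rintro ⟨x, y⟩ hxy
          rw [mem_coe, mem_filter, mem_product] at hxy
          refine ⟨⟨e.symm ⟨x, hxy.1.1⟩, e.symm ⟨y, hxy.1.2⟩⟩, ?_, by simp⟩
          simpa [OrderIso.symm_apply_lt, ← Subtype.coe_lt_coe] using hxy.2
        · simp

namespace Equiv.Perm

variable {α κ : Type*} {β : κ → Type*}

theorem sign_viaEmbedding [Fintype α] [DecidableEq α] {γ : Type*} [Fintype γ] [DecidableEq γ]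
    (e : Perm γ) (ι : γ ↪ α) :
    sign (e.viaEmbedding ι) = sign e := by
  rw [viaEmbedding]
  convert sign_extendDomain e (Equiv.ofInjective ι ι.2) using 3
  all_goals rfl

section Sign

variable [Fintype κ] [DecidableEq κ] [∀ j, Fintype (β j)] [∀ j, DecidableEq (β j)]

theorem sign_sigmaCongrRight_mulSingle (j : κ) (σ : Perm (β j)) :
    sign (sigmaCongrRight (Pi.mulSingle j σ)) = sign σ := by
  refine (sign_bij (f := σ) (fun b _ => ⟨j, b⟩) (fun b _ _ => ?_) (fun _ _ _ _ h => ?_)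
    (fun ⟨j', b⟩ hb => ?_)).symm
  · simp [sigmaCongrRight_apply]
  · simpa using h
  · obtain rfl : j' = j := by
      by_contra hj
      simp [sigmaCongrRight_apply, Pi.mulSingle_eq_of_ne hj] at hb
    exact ⟨b, by simpa [sigmaCongrRight_apply] using hb, rfl⟩

theorem sign_sigmaCongrRight (g : ∀ j, Perm (β j)) :
    sign (sigmaCongrRight g) = ∏ j, sign (g j) := by
  have h := Finset.map_noncommProd univ (fun j => Pi.mulSingle j (g j))
    (fun i _ j _ _ => Pi.mulSingle_apply_commute g i j) (sign.comp (sigmaCongrRightHom β))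
  rw [noncommProd_mulSingle, noncommProd_eq_prod] at h
  simpa [sign_sigmaCongrRight_mulSingle] using h

end Sign

noncomputable def sigmaCongrRightViaEmbedding (τ : (Σ j, β j) ↪ α) :
    (∀ j, Perm (β j)) ↪ Perm α where
  toFun g := (sigmaCongrRight g).viaEmbedding τ
  inj' g g' h := by
    exact sigmaCongrRightHom_injective (viaEmbeddingHom_injective τ h)

variable (τ : (Σ j, β j) ↪ α)

theorem sigmaCongrRightViaEmbedding_apply_embedding (g : ∀ j, Perm (β j)) (b : Σ j, β j) :
    sigmaCongrRightViaEmbedding τ g (τ b) = τ ⟨b.1, g b.1 b.2⟩ :=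
  viaEmbedding_apply _ _ _

theorem sigmaCongrRightViaEmbedding_apply_of_notMem (g : ∀ j, Perm (β j)) {x : α}
    (hx : x ∉ Set.range τ) : sigmaCongrRightViaEmbedding τ g x = x :=
  viaEmbedding_apply_of_notMem _ _ _ hx

theorem mem_range_sigmaCongrRightViaEmbedding [∀ j, Finite (β j)] (w : Perm α) :
    w ∈ Set.range (sigmaCongrRightViaEmbedding τ) ↔
      (∀ x ∉ Set.range τ, w x = x) ∧ ∀ b, ∃ b' : β b.1, w (τ b) = τ ⟨b.1, b'⟩ := by
  constructor
  · rintro ⟨g, rfl⟩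
    exact ⟨fun x hx => sigmaCongrRightViaEmbedding_apply_of_notMem τ g hx,
      fun b => ⟨g b.1 b.2, sigmaCongrRightViaEmbedding_apply_embedding τ g b⟩⟩
  · rintro ⟨hfix, hmaps⟩
    choose f hf using hmaps
    have hinj (j) : Function.Injective fun b => f ⟨j, b⟩ := fun b b' h => by
      have : w (τ ⟨j, b⟩) = w (τ ⟨j, b'⟩) := by
        rw [hf, hf]
        exact congrArg (fun b => τ ⟨j, b⟩) h
      simpa using τ.injective (w.injective this)
    refine ⟨fun j => Equiv.ofBijective _ (Finite.injective_iff_bijective.1 (hinj j)), ?_⟩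
    ext x
    by_cases hx : x ∈ Set.range τ
    · obtain ⟨⟨j, b⟩, rfl⟩ := hx
      simp [sigmaCongrRightViaEmbedding_apply_embedding, hf]
    · rw [sigmaCongrRightViaEmbedding_apply_of_notMem τ _ hx, hfix x hx]

variable [Fintype α] [DecidableEq α] [Fintype κ] [∀ j, Fintype (β j)]

theorem sign_sigmaCongrRightViaEmbedding [DecidableEq κ] [∀ j, DecidableEq (β j)]
    (g : ∀ j, Perm (β j)) : sign (sigmaCongrRightViaEmbedding τ g) = ∏ j, sign (g j) :=
  (sign_viaEmbedding _ τ).trans (sign_sigmaCongrRight g)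

variable {R : Type*} [CommRing R]

theorem prod_pow_sigmaCongrRightViaEmbedding (g : ∀ j, Perm (β j)) (v : α → R) (e : α → ℕ) :
    ∏ x, v (sigmaCongrRightViaEmbedding τ g x) ^ e x =
      (∏ j, ∏ b, v (τ ⟨j, g j b⟩) ^ e (τ ⟨j, b⟩)) *
        ∏ x ∈ univ.filter (· ∉ Set.range τ), v x ^ e x := by
  rw [← prod_filter_mul_prod_filter_not univ (· ∈ Set.range τ)]
  congr 1
  · rw [show univ.filter (· ∈ Set.range τ) = univ.map τ by ext; simp, prod_map,
      Fintype.prod_sigma]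
    simp [sigmaCongrRightViaEmbedding_apply_embedding]
  · refine prod_congr rfl fun x hx => ?_
    rw [sigmaCongrRightViaEmbedding_apply_of_notMem τ g (mem_filter.1 hx).2]

theorem sum_sign_mul_prod_pow_sigmaCongrRightViaEmbedding [DecidableEq κ]
    [∀ j, DecidableEq (β j)] (v : α → R) (e : α → ℕ) :
    ∑ g, ((sign (sigmaCongrRightViaEmbedding τ g) : ℤ) : R) *
        ∏ x, v (sigmaCongrRightViaEmbedding τ g x) ^ e x =
      (∏ j, ∑ σ : Perm (β j), ((sign σ : ℤ) : R) * ∏ b, v (τ ⟨j, σ b⟩) ^ e (τ ⟨j, b⟩)) *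
        ∏ x ∈ univ.filter (· ∉ Set.range τ), v x ^ e x := by
  simp only [sign_sigmaCongrRightViaEmbedding, prod_pow_sigmaCongrRightViaEmbedding,
    Fintype.prod_sum, sum_mul, Units.coe_prod, Int.cast_prod, prod_mul_distrib, mul_assoc]

end Equiv.Perm

theorem MvPolynomial.rename_monomial_equivFunOnFinite_symm {σ τ R : Type*} [CommSemiring R]
    [Fintype σ] (f : σ → τ) (a : σ → ℕ) :
    rename f (monomial (Finsupp.equivFunOnFinite.symm a) (1 : R)) = ∏ i, X (f i) ^ a i := by
  simp [monomial_eq, Finsupp.prod_fintype]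

section Tableau

variable {lam : List ℕ}

theorem IsBoxOf.lt_length {r j : ℕ} (h : IsBoxOf lam r j) : r < lam.length := by
  by_contra hr
  rw [IsBoxOf, List.getD_eq_default _ _ (not_lt.1 hr)] at h
  exact Nat.not_lt_zero _ h

theorem IsBoxOf.lt_headD (hsort : lam.Pairwise (· ≥ ·)) {r j : ℕ} (h : IsBoxOf lam r j) :
    j < lam.headD 0 := by
  obtain _ | ⟨p, lam⟩ := lam
  · simp [IsBoxOf] at h
  · rcases r with _ | r
    · exact h
    · have hr : r < lam.length := Nat.lt_of_succ_lt_succ h.lt_length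
      simp only [IsBoxOf, List.getD_cons_succ, List.getD_eq_getElem _ _ hr] at h
      exact h.trans_le ((List.pairwise_cons.1 hsort).1 _ (List.getElem_mem hr))

noncomputable def colRows (lam : List ℕ) (j : ℕ) : Finset ℕ :=
  (range lam.length).filter (IsBoxOf lam · j)

theorem mem_colRows {r j : ℕ} : r ∈ colRows lam j ↔ IsBoxOf lam r j := by
  simpa [colRows] using fun h => h.lt_length

theorem filter_colRows_lt (r j : ℕ) : (colRows lam j).filter (r < ·) =
    (range lam.length).filter fun r' => r < r' ∧ IsBoxOf lam r' j := by
  ext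
  simp only [colRows, mem_filter, mem_range]
  tauto

theorem filter_colRows_product (j : ℕ) :
    (colRows lam j ×ˢ colRows lam j).filter (fun p => p.1 < p.2) =
      (range lam.length ×ˢ range lam.length).filter
        fun p => p.1 < p.2 ∧ IsBoxOf lam p.1 j ∧ IsBoxOf lam p.2 j := by
  ext
  simp only [colRows, mem_filter, mem_product, mem_range]
  tauto

variable {n : ℕ} {T : ℕ → ℕ → Fin n}

def tableauEmbedding (hinj : ∀ r j r' j', IsBoxOf lam r j → IsBoxOf lam r' j' →
      T r j = T r' j' → r = r' ∧ j = j') :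
    (Σ j : range (lam.headD 0), colRows lam j) ↪ Fin n where
  toFun b := T b.2 b.1
  inj' := by
    rintro ⟨⟨j, hj⟩, ⟨r, hr⟩⟩ ⟨⟨j', hj'⟩, ⟨r', hr'⟩⟩ h
    obtain ⟨rfl, rfl⟩ := hinj r j r' j' (mem_colRows.1 hr) (mem_colRows.1 hr') h
    rfl

variable (hinj : ∀ r j r' j', IsBoxOf lam r j → IsBoxOf lam r' j' → T r j = T r' j' →
  r = r' ∧ j = j')

theorem range_tableauEmbedding (hsort : lam.Pairwise (· ≥ ·)) :
    Set.range (tableauEmbedding hinj) = {i | AppearsIn lam T i} := by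
  ext i
  constructor
  · rintro ⟨⟨j, r⟩, rfl⟩
    exact ⟨r, j, mem_colRows.1 r.2, rfl⟩
  · rintro ⟨r, j, hb, rfl⟩
    exact ⟨⟨⟨j, mem_range.2 (hb.lt_headD hsort)⟩, ⟨r, mem_colRows.2 hb⟩⟩, rfl⟩

theorem colStab_iff (hsort : lam.Pairwise (· ≥ ·)) (w : Equiv.Perm (Fin n)) :
    ColStab lam T w ↔ (∀ x ∉ Set.range (tableauEmbedding hinj), w x = x) ∧
      ∀ b, ∃ b' : colRows lam b.1,
        w (tableauEmbedding hinj b) = tableauEmbedding hinj ⟨b.1, b'⟩ := by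
  rw [range_tableauEmbedding hinj hsort]
  refine and_congr Iff.rfl ⟨fun h b => ?_, fun h r j hb => ?_⟩
  · obtain ⟨r', hb', hw⟩ := h b.2 b.1 (mem_colRows.1 b.2.2)
    exact ⟨⟨r', mem_colRows.2 hb'⟩, hw⟩
  · obtain ⟨⟨r', hr'⟩, hw⟩ := h ⟨⟨j, mem_range.2 (hb.lt_headD hsort)⟩, ⟨r, mem_colRows.2 hb⟩⟩
    exact ⟨r', mem_colRows.1 hr', hw⟩

theorem filter_colStab_eq_map (hsort : lam.Pairwise (· ≥ ·)) :
    univ.filter (ColStab lam T) =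
      univ.map (Equiv.Perm.sigmaCongrRightViaEmbedding (tableauEmbedding hinj)) := by
  ext w
  rw [mem_filter, mem_map, colStab_iff hinj hsort,
    ← Equiv.Perm.mem_range_sigmaCongrRightViaEmbedding]
  simp

theorem sum_sign_mul_prod_pow_colRows {R : Type*} [CommRing R] {a : Fin n → ℕ}
    (ha1 : ∀ r j, IsBoxOf lam r j →
      a (T r j) = ((range lam.length).filter fun r' => r < r' ∧ IsBoxOf lam r' j).card)
    (v : Fin n → R) (j : ℕ) :
    ∑ σ : Equiv.Perm (colRows lam j), ((Equiv.Perm.sign σ : ℤ) : R) *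
        ∏ b, v (T (σ b) j) ^ a (T b j) =
      ∏ p ∈ (range lam.length ×ˢ range lam.length).filter
          (fun p => p.1 < p.2 ∧ IsBoxOf lam p.1 j ∧ IsBoxOf lam p.2 j),
        (v (T p.1 j) - v (T p.2 j)) := by
  rw [← filter_colRows_product]
  convert sum_sign_mul_prod_pow_card_filter_lt (colRows lam j) (fun r => v (T r j)) using 1
  refine sum_congr rfl fun σ _ => congrArg _ (prod_congr rfl fun b _ => ?_)
  rw [filter_colRows_lt, ha1 _ _ (mem_colRows.1 b.2)]

end Tableau

theorem deltaT_factorization_general (n : ℕ) (lam : List ℕ)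
    (hsort : lam.Pairwise (· ≥ ·))
    (T : ℕ → ℕ → Fin n)
    (hinj : ∀ r j r' j', IsBoxOf lam r j → IsBoxOf lam r' j' →
      T r j = T r' j' → r = r' ∧ j = j')
    (a : Fin n → ℕ)
    (ha1 : ∀ r j, IsBoxOf lam r j →
      a (T r j) = ((Finset.range lam.length).filter
        fun r' => r < r' ∧ IsBoxOf lam r' j).card)
    (ha2 : ∀ i : Fin n, ¬AppearsIn lam T i → a i = lam.length - 1)
    : deltaTsum lam T a = deltaTprod lam T := by
  rw [deltaTsum, filter_colStab_eq_map hinj hsort, sum_map]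
  simp only [Int.cast_smul_eq_zsmul, zsmul_eq_mul, rename_monomial_equivFunOnFinite_symm]
  rw [Equiv.Perm.sum_sign_mul_prod_pow_sigmaCongrRightViaEmbedding, deltaTprod,
    ← prod_coe_sort (range _)]
  congr 1
  · exact prod_congr rfl fun j _ => sum_sign_mul_prod_pow_colRows ha1 _ _
  · refine prod_congr (by ext; simp [range_tableauEmbedding hinj hsort]) fun i hi => ?_
    rw [ha2 i (mem_filter.1 hi).2]

/-- the factorization `δ_T = δ_{C_1} ⋯ δ_{C_r} · ∏_{i ∉ T} x_i^{s-1}`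
of the antisymmetrized monomial `ε_T · x(T)`. -/
theorem deltaT_factorization (n k : ℕ) (lam : List ℕ) (hk : 0 < k) (hkn : k ≤ n)
    (hsort : lam.Pairwise (· ≥ ·)) (hsum : lam.sum = k)
    (T : ℕ → ℕ → Fin n)
    (hcolstrict : ∀ r r' j, IsBoxOf lam r j → IsBoxOf lam r' j → r < r' →
      T r j < T r' j)
    (hinj : ∀ r j r' j', IsBoxOf lam r j → IsBoxOf lam r' j' →
      T r j = T r' j' → r = r' ∧ j = j')
    (a : Fin n → ℕ)
    (ha1 : ∀ r j, IsBoxOf lam r j →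
      a (T r j) = ((Finset.range lam.length).filter
        fun r' => r < r' ∧ IsBoxOf lam r' j).card)
    (ha2 : ∀ i : Fin n, ¬AppearsIn lam T i → a i = lam.length - 1)
    : deltaTsum lam T a = deltaTprod lam T :=
  deltaT_factorization_general n lam hsort T hinj a ha1 ha2
end
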